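/- Let W₀ be a finite Weyl group acting on the coweight lattice, μ a dominant coweight, and let x ∈ W̃ = X_* ⋊ W₀ be an element of the admissible set Adm(μ) of codimension 1 (length ℓ(t_μ) − 1) such that x ≤ t_{ν₁} and x ≤ t_{ν₂} for the only two maximal elements above x, with ν₁ antidominant. Write x = s₁ t_{ν₁} for an affine reflection s₁. Then ν₂ = s(ν₁) for the linear reflection s that is the image of s₁ in W₀, and ν₁ ≠ ν₂ provided x lies below two distinct maximal elements. -/

import Mathlib

open scoped RealInnerProductSpace

/-- An affine reflection of a Euclidean space with unit normal `u` and constant `c`. -/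
def IsAffineReflectionWith {V : Type*} [NormedAddCommGroup V] [InnerProductSpace ℝ V]
    (s : V → V) (u : V) (c : ℝ) : Prop :=
  ‖u‖ = 1 ∧ ∀ x, s x = x - (2 * (⟪x, u⟫ - c)) • u

/-
If `x = s₁ t_{ν₁} = s₂ t_{ν₂}`, then `v ↦ s₁ (v + ν₁)` and `v ↦ s₂ (v + ν₂)` coincide; comparing
their linear parts shows that the normals of `s₁` and `s₂` are parallel, and comparing their values
at `0` that `ν₂ - ν₁` lies on the common normal line `ℝ u₁`. Since `‖ν₂‖ = ‖ν₁‖` and `ν₂ ≠ ν₁`,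
the point `ν₂` is the second intersection of that line through `ν₁` with the sphere of radius
`‖ν₁‖`, namely the mirror image `ν₁ - 2⟪ν₁, u₁⟫ u₁`.
-/

section

variable {V : Type*} [NormedAddCommGroup V] [InnerProductSpace ℝ V]

namespace IsAffineReflectionWith

variable {s s' : V → V} {u u' : V} {c c' : ℝ}

theorem inner_self (h : IsAffineReflectionWith s u c) : ⟪u, u⟫ = 1 := by
  rw [real_inner_self_eq_norm_sq, h.1, one_pow]

theorem apply_add (h : IsAffineReflectionWith s u c) (v w : V) :
    s (v + w) = s w + (v - (2 * ⟪v, u⟫) • u) := by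
  rw [h.2, h.2, inner_add_left]
  module

theorem inner_smul_eq_of_apply_add_eq (h : IsAffineReflectionWith s u c)
    (h' : IsAffineReflectionWith s' u' c') {a b : V} (hab : ∀ v, s (v + a) = s' (v + b)) (v : V) :
    ⟪v, u⟫ • u = ⟪v, u'⟫ • u' := by
  have hv := hab v
  rw [h.apply_add, h'.apply_add, ← zero_add a, ← zero_add b, hab 0, add_right_inj,
    sub_right_inj, mul_smul, mul_smul] at hv
  exact smul_right_injective V two_ne_zero hv

theorem eq_inner_smul_of_apply_add_eq (h : IsAffineReflectionWith s u c)
    (h' : IsAffineReflectionWith s' u' c') {a b : V} (hab : ∀ v, s (v + a) = s' (v + b)) :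
    u' = ⟪u', u⟫ • u := by
  rw [h.inner_smul_eq_of_apply_add_eq h' hab u', h'.inner_self, one_smul]

theorem exists_eq_add_smul_of_apply_add_eq (h : IsAffineReflectionWith s u c)
    (h' : IsAffineReflectionWith s' u' c') {a b : V} (hab : ∀ v, s (v + a) = s' (v + b)) :
    ∃ k : ℝ, b = a + k • u := by
  have h0 : s a = s' b := by simpa using hab 0
  rw [h.2, h'.2, h.eq_inner_smul_of_apply_add_eq h' hab, smul_smul] at h0
  exact ⟨_, by rw [← sub_eq_iff_eq_add', sub_eq_sub_iff_sub_eq_sub.mp h0.symm, ← sub_smul]⟩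

end IsAffineReflectionWith

theorem eq_neg_two_mul_inner_of_norm_add_smul_eq {a u : V} {k : ℝ} (hu : ‖u‖ = 1)
    (hk : k ≠ 0) (h : ‖a + k • u‖ = ‖a‖) : k = -(2 * ⟪a, u⟫) := by
  have hsq : k * (k + 2 * ⟪a, u⟫) = 0 := by
    have := congrArg (· ^ 2) h
    simp only [norm_add_sq_real, norm_smul, real_inner_smul_right, hu, Real.norm_eq_abs,
      mul_pow, sq_abs] at this
    linarith
  linarith [(mul_eq_zero.mp hsq).resolve_left hk]

end

theorem codim_one_weights_exchanged_by_linear_reflection_general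
    {V : Type*} [NormedAddCommGroup V] [InnerProductSpace ℝ V]
    {W : Type*} [Group W]
    (ρ : W →* Equiv.Perm V)
    (t : V → W) (ht : ∀ ν v, ρ (t ν) v = v + ν)
    (s₁ s₂ : W) (u₁ u₂ : V) (c₁ c₂ : ℝ)
    (h₁ : IsAffineReflectionWith (ρ s₁) u₁ c₁)
    (h₂ : IsAffineReflectionWith (ρ s₂) u₂ c₂)
    (ν₁ ν₂ : V) (hlen : ‖ν₁‖ = ‖ν₂‖)
    (x : W) (hx₁ : x = s₁ * t ν₁) (hx₂ : x = s₂ * t ν₂)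
    (hdist : t ν₁ ≠ t ν₂) :
    ν₁ ≠ ν₂ ∧ ν₂ = ν₁ - (2 * ⟪ν₁, u₁⟫) • u₁ := by
  have hne : ν₁ ≠ ν₂ := fun h => hdist (congrArg t h)
  have hact : ∀ v, ρ s₁ (v + ν₁) = ρ s₂ (v + ν₂) := fun v => by
    simpa only [map_mul, Equiv.Perm.mul_apply, ht] using congrArg (ρ · v) (hx₁.symm.trans hx₂)
  obtain ⟨k, hk⟩ := h₁.exists_eq_add_smul_of_apply_add_eq h₂ hact
  have hk0 : k ≠ 0 := by
    rintro rfl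
    exact hne (by simpa using hk.symm)
  have hkval := eq_neg_two_mul_inner_of_norm_add_smul_eq h₁.1 hk0 (hk ▸ hlen.symm)
  refine ⟨hne, ?_⟩
  rw [hk, hkval, neg_smul, ← sub_eq_add_neg]

/-- In the extended affine Weyl group `W̃` (realized as a group acting
faithfully by affine transformations on the Euclidean space `V`, with translation
elements `t ν`), suppose the codimension-one element `x` satisfies `x = s₁ * t ν₁` and
`x = s₂ * t ν₂` for affine reflections `s₁, s₂` and the two maximal elements
`t ν₁ ≠ t ν₂` above `x`, where `ν₁, ν₂` lie in the `W₀`-orbit `Λ(μ)` (in particular have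
the same length).  Then `ν₁ ≠ ν₂` and `ν₂ = s(ν₁)`, where `s` is the linear reflection
that is the image of `s₁` in `W₀` (i.e. the linear part of `s₁`, reflection in the
unit normal `u` of its fixed hyperplane). -/
theorem codim_one_weights_exchanged_by_linear_reflection
    {V : Type*} [NormedAddCommGroup V] [InnerProductSpace ℝ V] [FiniteDimensional ℝ V]
    {W : Type*} [Group W]
    (ρ : W →* Equiv.Perm V) (hfaith : Function.Injective ρ)
    (t : V → W) (ht : ∀ ν v, ρ (t ν) v = v + ν)
    (s₁ s₂ : W) (u₁ u₂ : V) (c₁ c₂ : ℝ)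
    (h₁ : IsAffineReflectionWith (ρ s₁) u₁ c₁)
    (h₂ : IsAffineReflectionWith (ρ s₂) u₂ c₂)
    (ν₁ ν₂ : V) (hlen : ‖ν₁‖ = ‖ν₂‖)
    (x : W) (hx₁ : x = s₁ * t ν₁) (hx₂ : x = s₂ * t ν₂)
    (hdist : t ν₁ ≠ t ν₂) :
    ν₁ ≠ ν₂ ∧ ν₂ = ν₁ - (2 * ⟪ν₁, u₁⟫) • u₁ :=
  codim_one_weights_exchanged_by_linear_reflection_general ρ t ht s₁ s₂ u₁ u₂ c₁ c₂ h₁ h₂ ν₁ ν₂ hlen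
    x hx₁ hx₂ hdist
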